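/- Let q be an odd prime power with q ≡ 1 (mod 4), let γ be an even positive divisor of q - 1, and set n = (q-1)/γ with n > 2 and n odd. Then for every integer l with 0 ≤ l and 2γl ≤ q - 3γ - 1 there exists a negacyclic Hermitian LCD code over F_{q²} of length n, dimension n - 2l - 1 and minimum distance exactly 2l + 2; in particular this code is MDS. -/

import Mathlib

open Finset

/-- The negacyclic shift of a word: `(c_0, ..., c_{n-1}) ↦ (-c_{n-1}, c_0, ..., c_{n-2})`. -/
def negashift {F : Type*} [Neg F] {n : ℕ} (c : Fin n → F) : Fin n → F :=
  fun i =>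
    if _h : (i : ℕ) = 0 then -c ⟨n - 1, Nat.sub_lt i.pos Nat.one_pos⟩
    else c ⟨(i : ℕ) - 1, lt_of_le_of_lt (Nat.sub_le _ _) i.isLt⟩

/-- A linear code `C ≤ F^n` is negacyclic if it is closed under the negacyclic shift. -/
def IsNegacyclic {F : Type*} [Field F] {n : ℕ} (C : Submodule F (Fin n → F)) : Prop :=
  ∀ c ∈ C, negashift c ∈ C

/-- `C` is an LCD code: `C ∩ C^⊥ = {0}` for the Euclidean inner product. -/
def IsLCD {F : Type*} [Field F] {n : ℕ} (C : Submodule F (Fin n → F)) : Prop :=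
  ∀ x ∈ C, (∀ y ∈ C, ∑ i, x i * y i = 0) → x = 0

/-- `C` is a Hermitian LCD code: `C ∩ C^{⊥H} = {0}` for the Hermitian inner product
`⟨x, y⟩ = ∑ x_i y_i^q`. -/
def IsHermLCD (q : ℕ) {F : Type*} [Field F] {n : ℕ} (C : Submodule F (Fin n → F)) : Prop :=
  ∀ x ∈ C, (∀ y ∈ C, ∑ i, x i * (y i) ^ q = 0) → x = 0

open scoped Classical in
/-- The Hamming weight of a word. -/
noncomputable def wt {F : Type*} [Zero F] {n : ℕ} (c : Fin n → F) : ℕ :=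
  (Finset.univ.filter fun i => c i ≠ 0).card

/-- The minimum distance of the code `C` is exactly `d`: `d` is the least Hamming weight
of a nonzero codeword. -/
def HasMinDist {F : Type*} [Zero F] {n : ℕ} (C : Set (Fin n → F)) (d : ℕ) : Prop :=
  IsLeast {w : ℕ | ∃ c ∈ C, c ≠ 0 ∧ wt c = w} d

/-!
Let `α` be a primitive `2n`-th root of unity; since `2n ∣ q - 1`, `α` lies in `𝔽_q`,
i.e. `α ^ q = α`. Take the code whose defining set is the `2l + 1` consecutive odd exponents
`n - 2l, …, n + 2l`. Its zeros are roots of `X ^ n + 1`, so it is negacyclic; they form a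
geometric progression, so the Vandermonde (BCH) argument gives distance at least `2l + 2`, which
the generator polynomial attains. The defining set is closed under `j ↦ 2n - j`, hence for every
odd `j` outside it the word `(α ^ (j i))ᵢ` is a codeword fixed by Frobenius. A codeword
Hermitian-orthogonal to the code is therefore annihilated by `α ^ j` for all `n` odd `j`, and an
`n × n` Vandermonde system forces it to be `0`.
-/

lemma exists_isPrimitiveRoot_of_dvd_card_sub_one {K : Type*} [Field K] [Fintype K] {d : ℕ}
    (h : d ∣ Fintype.card K - 1) : ∃ ζ : K, IsPrimitiveRoot ζ d := by
  classical
  obtain ⟨g, hg⟩ := IsCyclic.exists_ofOrder_eq_natCard (α := Kˣ)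
  rw [Nat.card_eq_fintype_card, Fintype.card_units] at hg
  have hg' : IsPrimitiveRoot (g : K) (Fintype.card K - 1) := by
    rwa [IsPrimitiveRoot.iff_orderOf, orderOf_units]
  obtain ⟨c, hc⟩ := h
  have hpos : 0 < Fintype.card K - 1 := by have := Fintype.one_lt_card (α := K); omega
  exact ⟨_, hg'.pow hpos (hc.trans (mul_comm d c))⟩

lemma IsPrimitiveRoot.pow_odd_pow_eq_neg_one {K : Type*} [CommRing K] [IsDomain K] {α : K} {n k : ℕ}
    (hn : 0 < n) (hα : IsPrimitiveRoot α (2 * n)) (hk : Odd k) : (α ^ k) ^ n = -1 := by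
  obtain ⟨w, rfl⟩ := hk
  have hαn : α ^ n = -1 := (hα.pow (by omega) (mul_comm 2 n)).eq_neg_one_of_two_right
  rw [← pow_mul, show (2 * w + 1) * n = 2 * n * w + n by ring, pow_add, pow_mul, hα.pow_eq_one,
    one_pow, one_mul, hαn]

lemma Finset.eq_zero_of_forall_sum_mul_pow_eq_zero {ι K : Type*} [CommRing K] [IsDomain K]
    (s : Finset ι) {x d : ι → K} (hx : Set.InjOn x s)
    (h : ∀ t < s.card, ∑ i ∈ s, d i * x i ^ t = 0) : ∀ i ∈ s, d i = 0 := by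
  set e := s.equivFin.symm
  have hsum (t : ℕ) : ∑ r, d (e r) * x (e r) ^ t = ∑ i ∈ s, d i * x i ^ t := by
    rw [← Finset.sum_coe_sort s]
    exact e.sum_comp (fun i : s => d i * x i ^ t)
  have hinj : Function.Injective (fun r => x (e r)) :=
    fun a b hab => e.injective (Subtype.ext (hx (e a).2 (e b).2 hab))
  have hzero := Matrix.eq_zero_of_forall_pow_sum_mul_pow_eq_zero hinj
    (fun t => (hsum t).trans (h t t.isLt))
  intro i hi
  simpa [e] using congrFun hzero (s.equivFin ⟨i, hi⟩)

section rootCode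

variable {E : Type*} [Field E] {n m : ℕ}

/-- The words whose polynomial `∑ cᵢ Xⁱ` vanishes at every `β t`; when the `β t` are the roots
`α ^ j`, `j ∈ Z`, of `X ^ n + 1`, this is the negacyclic code with defining set `Z`. -/
def rootCode (n : ℕ) (β : Fin m → E) : Submodule E (Fin n → E) :=
  LinearMap.ker (Matrix.of fun t (i : Fin n) => β t ^ (i : ℕ)).mulVecLin

lemma mem_rootCode {β : Fin m → E} {c : Fin n → E} :
    c ∈ rootCode n β ↔ ∀ t, ∑ i, c i * β t ^ (i : ℕ) = 0 := by
  simp only [rootCode, LinearMap.mem_ker, Matrix.mulVecLin_apply, funext_iff, Matrix.mulVec,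
    dotProduct, Matrix.of_apply, Pi.zero_apply, mul_comm]

lemma finrank_rootCode {β : Fin m → E} (hβ : Function.Injective β) (hmn : m ≤ n) :
    Module.finrank E (rootCode n β) = n - m := by
  set M : Matrix (Fin m) (Fin n) E := Matrix.of fun t i => β t ^ (i : ℕ)
  have hrank : M.rank = m := by
    refine le_antisymm M.rank_le_height ?_
    have hV : M.submatrix id (Fin.castLE hmn) = Matrix.vandermonde β := rfl
    calc m = (Matrix.vandermonde β).rank :=
          ((Matrix.rank_of_isUnit _ ((Matrix.isUnit_iff_isUnit_det _).mpr (isUnit_iff_ne_zero.mpr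
            (Matrix.det_vandermonde_ne_zero_iff.mpr hβ)))).trans (Fintype.card_fin m)).symm
      _ ≤ M.rank := hV ▸ M.rank_submatrix_le id (Fin.castLE hmn)
  have := LinearMap.finrank_range_add_finrank_ker M.mulVecLin
  rw [← Matrix.rank, hrank, Module.finrank_fin_fun] at this
  exact Nat.eq_sub_of_add_eq' this

lemma sum_negashift_mul_pow (c : Fin n → E) {β : E} (hβ : β ^ n = -1) :
    ∑ i, negashift c i * β ^ (i : ℕ) = β * ∑ i, c i * β ^ (i : ℕ) := by
  cases n with
  | zero => simp
  | succ n =>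
    have h0 : negashift c 0 = -c (Fin.last n) := by simp [negashift, Fin.last]
    have hsucc (i : Fin n) : negashift c i.succ = c i.castSucc := by
      simp [negashift, Fin.castSucc, Fin.castAdd, Fin.castLE]
    rw [Fin.sum_univ_succ, Fin.sum_univ_castSucc, h0, mul_add, Finset.mul_sum]
    simp only [hsucc, Fin.val_succ, Fin.val_zero, Fin.val_last, Fin.val_castSucc, pow_zero,
      mul_one]
    rw [add_comm]
    congr 1
    · exact Finset.sum_congr rfl fun i _ => by ring
    · rw [mul_left_comm, ← pow_succ', hβ, mul_neg_one]

lemma isNegacyclic_rootCode {β : Fin m → E} (hβ : ∀ t, β t ^ n = -1) :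
    IsNegacyclic (rootCode n β) := by
  intro c hc
  rw [mem_rootCode] at hc ⊢
  intro t
  rw [sum_negashift_mul_pow c (hβ t), hc t, mul_zero]

lemma lt_wt_of_mem_rootCode {a ω : E} (ha : a ≠ 0) (hω : IsPrimitiveRoot ω n) {c : Fin n → E}
    (hc : c ∈ rootCode n fun t : Fin m => a * ω ^ (t : ℕ)) (hc0 : c ≠ 0) : m < wt c := by
  classical
  by_contra! hwt
  set S := Finset.univ.filter fun i => c i ≠ 0
  have hS : S.card ≤ m := by unfold wt at hwt; convert hwt
  have hinj : Set.InjOn (fun i : Fin n => ω ^ (i : ℕ)) S :=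
    fun i _ j _ hij => Fin.ext (hω.injOn_pow (by simp) (by simp) hij)
  have hsum (t : ℕ) (ht : t < S.card) :
      ∑ i ∈ S, c i * a ^ (i : ℕ) * (ω ^ (i : ℕ)) ^ t = 0 := by
    have := mem_rootCode.mp hc ⟨t, ht.trans_le hS⟩
    rw [← Finset.sum_filter_of_ne fun i _ h => left_ne_zero_of_mul h] at this
    simpa only [mul_pow, ← pow_mul, mul_comm t, mul_assoc] using this
  have := Finset.eq_zero_of_forall_sum_mul_pow_eq_zero S hinj hsum
  refine hc0 (funext fun i => ?_)
  by_contra hci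
  have := this i (by simpa [S] using hci)
  exact hci ((mul_eq_zero.mp this).resolve_right (pow_ne_zero _ ha))

open Polynomial in
lemma exists_mem_rootCode_wt_le (β : Fin m → E) (hmn : m < n) :
    ∃ c ∈ rootCode n β, c ≠ 0 ∧ wt c ≤ m + 1 := by
  classical
  set g : E[X] := ∏ t, (X - C (β t))
  have hg : g.Monic := monic_prod_of_monic _ _ fun t _ => monic_X_sub_C (β t)
  have hdeg : g.natDegree = m := by
    simp [g, natDegree_prod _ _ fun t _ => X_sub_C_ne_zero (β t)]
  refine ⟨fun i => g.coeff i, mem_rootCode.mpr fun t => ?_, fun h => ?_, ?_⟩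
  · rw [Fin.sum_univ_eq_sum_range (fun i => g.coeff i * β t ^ i),
      ← eval_eq_sum_range' (hdeg ▸ hmn), eval_prod]
    exact Finset.prod_eq_zero (Finset.mem_univ t) (by simp)
  · have := congrFun h ⟨m, hmn⟩
    simp [← hdeg, hg.coeff_natDegree] at this
  · unfold wt
    calc _ ≤ (Finset.range (m + 1)).card :=
          Finset.card_le_card_of_injOn (fun i : Fin n => (i : ℕ))
            (fun i hi => Finset.mem_range_succ_iff.mpr
              (hdeg ▸ le_natDegree_of_ne_zero (Finset.mem_filter.mp hi).2))
            (fun _ _ _ _ h => Fin.ext h)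
      _ = m + 1 := Finset.card_range _

lemma hasMinDist_rootCode {a ω : E} (ha : a ≠ 0) (hω : IsPrimitiveRoot ω n) (hmn : m < n) :
    HasMinDist (rootCode n fun t : Fin m => a * ω ^ (t : ℕ) : Set (Fin n → E)) (m + 1) := by
  obtain ⟨c, hc, hc0, hwt⟩ := exists_mem_rootCode_wt_le (fun t : Fin m => a * ω ^ (t : ℕ)) hmn
  refine ⟨⟨c, hc, hc0, le_antisymm hwt (lt_wt_of_mem_rootCode ha hω hc hc0)⟩, ?_⟩
  rintro _ ⟨c, hc, hc0, rfl⟩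
  exact lt_wt_of_mem_rootCode ha hω hc hc0

lemma pow_mem_rootCode {ζ : E} {β : Fin m → E} (h : ∀ t, (ζ * β t) ^ n = 1 ∧ ζ * β t ≠ 1) :
    (fun i : Fin n => ζ ^ (i : ℕ)) ∈ rootCode n β := by
  refine mem_rootCode.mpr fun t => ?_
  simp_rw [← mul_pow]
  rw [Fin.sum_univ_eq_sum_range (fun i => (ζ * β t) ^ i), geom_sum_eq (h t).2, (h t).1,
    sub_self, zero_div]

lemma IsPrimitiveRoot.eq_zero_of_forall_odd_sum_eq_zero {α : E} (hα : IsPrimitiveRoot α (2 * n))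
    {x : Fin n → E} (h : ∀ j, Odd j → j < 2 * n → ∑ i, x i * (α ^ j) ^ (i : ℕ) = 0) : x = 0 := by
  obtain rfl | hn := n.eq_zero_or_pos
  · exact Subsingleton.elim _ _
  have hα2 : IsPrimitiveRoot (α ^ 2) n := hα.pow (by omega) rfl
  have hinj : Function.Injective fun i : Fin n => (α ^ 2) ^ (i : ℕ) :=
    fun i j hij => Fin.ext (hα2.injOn_pow (by simp) (by simp) hij)
  have hzero := Matrix.eq_zero_of_forall_pow_sum_mul_pow_eq_zero (v := fun i => x i * α ^ (i : ℕ))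
    hinj fun r => by
      rw [← h (2 * r + 1) (odd_two_mul_add_one _) (by omega)]
      exact Finset.sum_congr rfl fun i _ => by ring
  funext i
  exact (mul_eq_zero.mp (congrFun hzero i)).resolve_right (pow_ne_zero _ (hα.ne_zero (by omega)))

lemma isHermLCD_rootCode {q : ℕ} {α : E} (hn : 0 < n) (hα : IsPrimitiveRoot α (2 * n))
    (hαq : α ^ q = α) {k : Fin m → ℕ} (hk_odd : ∀ t, Odd (k t)) (hk_lt : ∀ t, k t < 2 * n)
    (hk_neg : ∀ t, ∃ t', k t + k t' = 2 * n) : IsHermLCD q (rootCode n fun t => α ^ k t) := by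
  intro x hx hdual
  refine hα.eq_zero_of_forall_odd_sum_eq_zero fun j hj hjn => ?_
  by_cases hZ : ∃ t, k t = j
  · obtain ⟨t, rfl⟩ := hZ
    exact mem_rootCode.mp hx t
  have hy : (fun i : Fin n => (α ^ j) ^ (i : ℕ)) ∈ rootCode n fun t => α ^ k t := by
    refine pow_mem_rootCode fun t => ⟨?_, fun h1 => ?_⟩
    · rw [mul_pow, hα.pow_odd_pow_eq_neg_one hn hj, hα.pow_odd_pow_eq_neg_one hn (hk_odd t)]
      norm_num
    · rw [← pow_add, hα.pow_eq_one_iff_dvd] at h1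
      obtain ⟨t', ht'⟩ := hk_neg t
      have := Nat.eq_of_dvd_of_lt_two_mul (by have := hj.pos; omega) h1
        (by have := hk_lt t; omega)
      exact hZ ⟨t', by omega⟩
  rw [← hdual _ hy]
  refine Finset.sum_congr rfl fun i _ => ?_
  rw [pow_right_comm (α ^ j) _ q, pow_right_comm α j q, hαq]

end rootCode

theorem stmt_12_general (q : ℕ)
    (E : Type) [Field E] [Fintype E] (hE : Fintype.card E = q ^ 2)
    (γ : ℕ) (hγ : 0 < γ) (hγpar : Even γ) (hdvd : γ ∣ q - 1)
    (n : ℕ) (hn : n = (q - 1) / γ) (hnodd : Odd n)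
    (l : ℕ) (hl : 2 * γ * l + 3 * γ + 1 ≤ q) :
    ∃ C : Submodule E (Fin n → E),
      IsNegacyclic C ∧ IsHermLCD q C ∧
      Module.finrank E C = n - 2 * l - 1 ∧
      HasMinDist (C : Set (Fin n → E)) (2 * l + 2) := by
  have hγn : γ * n = q - 1 := hn ▸ Nat.mul_div_cancel' hdvd
  have hln : 2 * l + 1 < n := by
    have : γ * (2 * l + 3) + 1 ≤ q := by linarith
    have : γ * (2 * l + 3) ≤ γ * n := by omega
    have := Nat.le_of_mul_le_mul_left this hγ
    omega
  obtain ⟨γ', rfl⟩ := hγpar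
  have h2n : 2 * n ∣ q - 1 := ⟨γ', by rw [← hγn]; ring⟩
  obtain ⟨α, hα⟩ := exists_isPrimitiveRoot_of_dvd_card_sub_one (K := E)
    (by simpa [hE] using h2n.trans (Nat.sub_dvd_pow_sub_pow q 1 2))
  have hαq : α ^ q = α := by
    rw [← pow_sub_one_mul (by omega), (hα.pow_eq_one_iff_dvd _).mpr h2n, one_mul]
  obtain ⟨k, hk⟩ : ∃ k : Fin (2 * l + 1) → ℕ, ∀ t, k t = n - 2 * l + 2 * t := ⟨_, fun _ => rfl⟩
  have hk_odd (t) : Odd (k t) := by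
    obtain ⟨w, hw⟩ := hnodd
    exact ⟨w - l + t, by rw [hk]; omega⟩
  have hk_lt (t) : k t < 2 * n := by rw [hk]; omega
  have hk_inj : Function.Injective fun t => α ^ k t := fun s t hst => by
    have := hα.injOn_pow (by simpa using hk_lt s) (by simpa using hk_lt t) hst
    rw [hk, hk] at this
    omega
  have hβ : (fun t => α ^ k t) = fun t : Fin (2 * l + 1) => α ^ (n - 2 * l) * (α ^ 2) ^ (t : ℕ) :=
    funext fun t => by rw [← pow_mul, ← pow_add, hk]
  refine ⟨rootCode n fun t => α ^ k t, ?_, ?_, ?_, ?_⟩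
  · exact isNegacyclic_rootCode fun t => hα.pow_odd_pow_eq_neg_one (by omega) (hk_odd t)
  · exact isHermLCD_rootCode (by omega) hα hαq hk_odd hk_lt
      fun t => ⟨t.rev, by rw [hk, hk, Fin.val_rev]; omega⟩
  · rw [finrank_rootCode hk_inj hln.le]
    omega
  · rw [hβ]
    exact hasMinDist_rootCode (pow_ne_zero _ (hα.ne_zero (by omega))) (hα.pow (by omega) rfl) hln

theorem stmt_12 (q : ℕ) (hq : IsPrimePow q) (hqodd : Odd q) (hmod : q % 4 = 1)
    (E : Type) [Field E] [Fintype E] (hE : Fintype.card E = q ^ 2)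
    (γ : ℕ) (hγ : 0 < γ) (hγpar : Even γ) (hdvd : γ ∣ q - 1)
    (n : ℕ) (hn : n = (q - 1) / γ) (hn2 : 2 < n) (hnodd : Odd n)
    (l : ℕ) (hl : 2 * γ * l + 3 * γ + 1 ≤ q) :
    ∃ C : Submodule E (Fin n → E),
      IsNegacyclic C ∧ IsHermLCD q C ∧
      Module.finrank E C = n - 2 * l - 1 ∧
      HasMinDist (C : Set (Fin n → E)) (2 * l + 2) :=
  stmt_12_general q E hE γ hγ hγpar hdvd n hn hnodd l hl
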